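/- arXiv:1204.0960 — 4 statements merged into one kernel-verified Lean document; each statement's English description precedes it below -/
import Mathlib

section
/- With the notation of the context: the map d' = π ∘ (d − d∘h∘d) ∘ ι satisfies d' ∘ d' = 0, and the maps f = π ∘ (id_C − d∘h) and g = (id_C − h∘d) ∘ ι are chain maps, i.e. f ∘ d = d' ∘ f and d ∘ g = g ∘ d'. -/
open Finsupp

/-- The complement of the two cancelled basis indices. -/
def cancelSet {I : Type*} (k l : I) : Set I := {i | i ≠ k ∧ i ≠ l}

variable {R : Type*} [CommRing R] {C : Type*} [AddCommGroup C] [Module R C]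
  {I : Type*}

/-- The inclusion `ι : C' → C` of the free module on the remaining basis vectors. -/
noncomputable def cancelIota (b : Module.Basis I R C) (k l : I) :
    ((cancelSet k l) →₀ R) →ₗ[R] C :=
  Finsupp.linearCombination R (fun i : cancelSet k l => b i.1)

/-- The projection `π : C → C'` killing `x_k` and `x_l` and fixing the other
basis vectors. -/
noncomputable def cancelPi (b : Module.Basis I R C) (k l : I) :
    C →ₗ[R] ((cancelSet k l) →₀ R) :=
  (Finsupp.lsubtypeDomain (cancelSet k l)) ∘ₗ (b.repr : C →ₗ[R] (I →₀ R))

/-- The map `h : C → C` with `h(x_l) = x_k` and `h(x_i) = 0` for `i ≠ l`. -/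
noncomputable def cancelH (b : Module.Basis I R C) (k l : I) : C →ₗ[R] C :=
  (LinearMap.toSpanSingleton R C (b k)) ∘ₗ (b.coord l)

/-- The reduced differential `d' = π ∘ (d - d∘h∘d) ∘ ι`. -/
noncomputable def cancelD (b : Module.Basis I R C) (k l : I) (d : C →ₗ[R] C) :
    ((cancelSet k l) →₀ R) →ₗ[R] ((cancelSet k l) →₀ R) :=
  (cancelPi b k l) ∘ₗ (d - d ∘ₗ (cancelH b k l) ∘ₗ d) ∘ₗ (cancelIota b k l)

/-- The chain map `f = π ∘ (id - d∘h) : C → C'`. -/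
noncomputable def cancelF (b : Module.Basis I R C) (k l : I) (d : C →ₗ[R] C) :
    C →ₗ[R] ((cancelSet k l) →₀ R) :=
  (cancelPi b k l) ∘ₗ (LinearMap.id - d ∘ₗ (cancelH b k l))

/-- The chain map `g = (id - h∘d) ∘ ι : C' → C`. -/
noncomputable def cancelG (b : Module.Basis I R C) (k l : I) (d : C →ₗ[R] C) :
    ((cancelSet k l) →₀ R) →ₗ[R] C :=
  (LinearMap.id - (cancelH b k l) ∘ₗ d) ∘ₗ (cancelIota b k l)

/- Write `D = d - d h d`, `P_i = x_i ⊗ x_i^*` and `Q = 1 - P_k - P_l = ι π`; then `d' = π D ι`,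
`f = π (1 - d h)` and `g = (1 - h d) ι`, so the three claims follow from
`D Q D = 0`, `D Q (1 - d h) = D` and `(1 - h d) Q D = D` in the endomorphism ring of `C`.
These hold in any ring: `d² = 0` gives `D d = d D = D² = 0`, and the normalisation
`d(x_k, x_l) = 1` gives `h d P_k = P_k` and `P_l d h = P_l`, hence `D P_k = 0` and `P_l D = 0`. -/

section ElimDiff

variable {A : Type*} [Ring A] {d h p q : A}

def elimDiff (d h : A) : A := d - d * h * d

theorem elimDiff_mul_eq_zero (hd : d * d = 0) : elimDiff d h * d = 0 := by
  rw [elimDiff, sub_mul, mul_assoc _ d, hd, mul_zero, sub_self]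

theorem mul_elimDiff_eq_zero (hd : d * d = 0) : d * elimDiff d h = 0 := by
  rw [elimDiff, mul_sub, ← mul_assoc, ← mul_assoc, hd, zero_mul, zero_mul, sub_self]

theorem elimDiff_mul_elimDiff_eq_zero (hd : d * d = 0) : elimDiff d h * elimDiff d h = 0 := by
  nth_rw 2 [elimDiff]
  rw [mul_sub, ← mul_assoc, ← mul_assoc, elimDiff_mul_eq_zero hd, zero_mul, zero_mul, sub_self]

theorem elimDiff_mul_eq_zero_of_mul_mul_eq (hp : h * d * p = p) : elimDiff d h * p = 0 := by
  rw [elimDiff, sub_mul, mul_assoc d h d, mul_assoc d (h * d), hp, sub_self]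

theorem mul_elimDiff_eq_zero_of_mul_mul_eq (hq : q * d * h = q) : q * elimDiff d h = 0 := by
  rw [elimDiff, mul_sub, ← mul_assoc, ← mul_assoc, hq, sub_self]

theorem elimDiff_mul_mul_elimDiff_eq_zero (hd : d * d = 0) (hp : h * d * p = p)
    (hq : q * d * h = q) : elimDiff d h * (1 - p - q) * elimDiff d h = 0 := by
  calc elimDiff d h * (1 - p - q) * elimDiff d h
      = elimDiff d h * elimDiff d h - elimDiff d h * p * elimDiff d h
          - elimDiff d h * (q * elimDiff d h) := by noncomm_ring
    _ = 0 := by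
      rw [elimDiff_mul_elimDiff_eq_zero hd, elimDiff_mul_eq_zero_of_mul_mul_eq hp,
        mul_elimDiff_eq_zero_of_mul_mul_eq hq]
      simp

theorem elimDiff_mul_mul_one_sub_mul (hd : d * d = 0) (hp : h * d * p = p)
    (hq : q * d * h = q) : elimDiff d h * (1 - p - q) * (1 - d * h) = elimDiff d h := by
  calc elimDiff d h * (1 - p - q) * (1 - d * h)
      = elimDiff d h - elimDiff d h * p * (1 - d * h) - elimDiff d h * d * h
          - elimDiff d h * q + elimDiff d h * (q * d * h) := by noncomm_ring
    _ = elimDiff d h := by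
      rw [elimDiff_mul_eq_zero hd, elimDiff_mul_eq_zero_of_mul_mul_eq hp, hq]
      simp

theorem one_sub_mul_mul_mul_elimDiff (hd : d * d = 0) (hp : h * d * p = p)
    (hq : q * d * h = q) : (1 - h * d) * (1 - p - q) * elimDiff d h = elimDiff d h := by
  calc (1 - h * d) * (1 - p - q) * elimDiff d h
      = elimDiff d h - (1 - h * d) * (q * elimDiff d h) - h * (d * elimDiff d h)
          - p * elimDiff d h + h * d * p * elimDiff d h := by noncomm_ring
    _ = elimDiff d h := by
      rw [mul_elimDiff_eq_zero hd, mul_elimDiff_eq_zero_of_mul_mul_eq hq, hp]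
      simp

end ElimDiff

noncomputable def basisMatrixUnit (b : Module.Basis I R C) (i j : I) : Module.End R C :=
  LinearMap.toSpanSingleton R C (b i) ∘ₗ b.coord j

theorem basisMatrixUnit_mul_mul (b : Module.Basis I R C) (d : Module.End R C) (i j i' j' : I) :
    basisMatrixUnit b i j * d * basisMatrixUnit b i' j' =
      b.repr (d (b i')) j • basisMatrixUnit b i j' := by
  ext x
  simp [basisMatrixUnit, smul_smul, mul_comm]

theorem cancelIota_comp_cancelPi (b : Module.Basis I R C) {k l : I} (hkl : k ≠ l) :
    cancelIota b k l ∘ₗ cancelPi b k l = 1 - basisMatrixUnit b k k - basisMatrixUnit b l l := by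
  classical
  refine b.ext fun j => ?_
  simp only [cancelIota, cancelPi, basisMatrixUnit, LinearMap.comp_apply, LinearEquiv.coe_coe,
    b.repr_self, Finsupp.lsubtypeDomain_apply, LinearMap.sub_apply, Module.End.one_apply,
    LinearMap.toSpanSingleton_apply, Module.Basis.coord_apply, Finsupp.single_apply]
  by_cases hj : j ∈ cancelSet k l
  · have hsingle : Finsupp.subtypeDomain (· ∈ cancelSet k l) (Finsupp.single j (1 : R)) =
        Finsupp.single ⟨j, hj⟩ 1 := by
      ext i
      simp [Finsupp.single_apply, Subtype.ext_iff, eq_comm]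
    simp [hsingle, hj.1, hj.2]
  · have hzero : Finsupp.subtypeDomain (· ∈ cancelSet k l) (Finsupp.single j (1 : R)) = 0 :=
      Finsupp.subtypeDomain_eq_zero_iff'.2 fun i hi =>
        Finsupp.single_eq_of_ne fun hij => hj (hij ▸ hi)
    simp only [cancelSet, Set.mem_ofPred_eq, not_and_or, not_not] at hj
    rcases hj with rfl | rfl <;> simp [hzero, hkl, hkl.symm]

/-- cancellation lemma, algebraic part: `d' ∘ d' = 0`, and
`f` and `g` are chain maps: `f ∘ d = d' ∘ f` and `d ∘ g = g ∘ d'`. -/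
theorem cancellation_chain_maps (b : Module.Basis I R C) (d : C →ₗ[R] C)
    (hd : d ∘ₗ d = 0) (k l : I) (hkl : k ≠ l) (hdkl : b.repr (d (b k)) l = 1) :
    (cancelD b k l d) ∘ₗ (cancelD b k l d) = 0 ∧
    (cancelF b k l d) ∘ₗ d = (cancelD b k l d) ∘ₗ (cancelF b k l d) ∧
    d ∘ₗ (cancelG b k l d) = (cancelG b k l d) ∘ₗ (cancelD b k l d) := by
  set π := cancelPi b k l
  set ι := cancelIota b k l
  set h := cancelH b k l
  have hp : h * d * basisMatrixUnit b k k = basisMatrixUnit b k k := by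
    rw [show h = basisMatrixUnit b k l from rfl, basisMatrixUnit_mul_mul, hdkl, one_smul]
  have hq : basisMatrixUnit b l l * d * h = basisMatrixUnit b l l := by
    rw [show h = basisMatrixUnit b k l from rfl, basisMatrixUnit_mul_mul, hdkl, one_smul]
  have hιπ : ι ∘ₗ π = 1 - basisMatrixUnit b k k - basisMatrixUnit b l l :=
    cancelIota_comp_cancelPi b hkl
  refine ⟨?_, ?_, ?_⟩
  · calc cancelD b k l d ∘ₗ cancelD b k l d
        = π ∘ₗ (elimDiff d h * (ι ∘ₗ π) * elimDiff d h) ∘ₗ ι := rfl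
      _ = 0 := by
        rw [hιπ, elimDiff_mul_mul_elimDiff_eq_zero hd hp hq, LinearMap.zero_comp,
          LinearMap.comp_zero]
  · calc cancelF b k l d ∘ₗ d = π ∘ₗ elimDiff d h := rfl
      _ = π ∘ₗ (elimDiff d h * (ι ∘ₗ π) * (1 - d * h)) := by
        rw [hιπ, elimDiff_mul_mul_one_sub_mul hd hp hq]
      _ = cancelD b k l d ∘ₗ cancelF b k l d := rfl
  · calc d ∘ₗ cancelG b k l d = (d * (1 - h * d)) ∘ₗ ι := rfl
      _ = elimDiff d h ∘ₗ ι := by rw [mul_sub, mul_one, ← mul_assoc, elimDiff]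
      _ = ((1 - h * d) * (ι ∘ₗ π) * elimDiff d h) ∘ₗ ι := by
        rw [hιπ, one_sub_mul_mul_mul_elimDiff hd hp hq]
      _ = cancelG b k l d ∘ₗ cancelD b k l d := rfl
end

section
/- With the notation of the context: the reduced differential d' is filtered with respect to the filtration induced on C', and its filtration degree is no less than that of d. Precisely, for every a ∈ C' and every p ≥ 0: if ι(a) ∈ F^p then ι(d'(a)) ∈ F^p; and moreover if d(ι(a)) ∈ F^p then ι(d'(a)) ∈ F^p. -/
open Finsupp

variable {R : Type*} [CommRing R] {C : Type*} [AddCommGroup C] [Module R C]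
  {I : Type*}

/-! `d'(a) = π(c - c_l • d(x_k))` with `c = d(ι a)`. The correction term `c_l • d(x_k)` is
nonzero only when `x_l` occurs in `c`; if `c ∈ F^p` and the filtration is adapted to the basis,
then `x_l ∈ F^p`, hence `d(x_k) ∈ F^p`. Since `π` followed by `ι` only deletes basis
coordinates, it preserves every adapted submodule, so `ι(d'(a)) ∈ F^p`. The first claim is the
second one applied to `d(ι a) ∈ F^p`. -/

namespace Module.Basis

variable (b : Module.Basis I R C) {P : Submodule R C}

theorem mem_of_repr_ne_zero (hP : P = Submodule.span R (b '' {i | b i ∈ P})) {v : C}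
    (hv : v ∈ P) {i : I} (hi : b.repr v i ≠ 0) : b i ∈ P := by
  rw [hP, b.mem_span_image] at hv
  exact hv (Finsupp.mem_support_iff.2 hi)

end Module.Basis

section Cancellation

variable (b : Module.Basis I R C) (k l : I) {P : Submodule R C}

theorem cancelIota_cancelPi_mem (hP : P = Submodule.span R (b '' {i | b i ∈ P})) {v : C}
    (hv : v ∈ P) : cancelIota b k l (cancelPi b k l v) ∈ P := by
  simp only [cancelIota, cancelPi, LinearMap.comp_apply, Finsupp.linearCombination_apply]
  refine Submodule.finsuppSum_mem _ _ _ _ fun i hi => Submodule.smul_mem _ _ ?_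
  refine b.mem_of_repr_ne_zero hP hv ?_
  simpa [Finsupp.lsubtypeDomain, Finsupp.subtypeDomain_apply] using hi

theorem cancelD_apply (d : C →ₗ[R] C) (a : cancelSet k l →₀ R) :
    cancelD b k l d a = cancelPi b k l
      (d (cancelIota b k l a) - b.repr (d (cancelIota b k l a)) l • d (b k)) := by
  simp [cancelD, cancelH, LinearMap.sub_apply, Module.Basis.coord_apply, map_smul]

theorem cancelIota_cancelD_mem (hP : P = Submodule.span R (b '' {i | b i ∈ P}))
    {d : C →ₗ[R] C} (hkl : b l ∈ P → d (b k) ∈ P) {a : cancelSet k l →₀ R}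
    (ha : d (cancelIota b k l a) ∈ P) : cancelIota b k l (cancelD b k l d a) ∈ P := by
  rw [cancelD_apply]
  refine cancelIota_cancelPi_mem b k l hP (P.sub_mem ha ?_)
  by_cases hl : b.repr (d (cancelIota b k l a)) l = 0
  · simp [hl]
  · exact P.smul_mem _ (hkl (b.mem_of_repr_ne_zero hP ha hl))

end Cancellation

theorem cancellation_filtered_differential_general (b : Module.Basis I R C) (d : C →ₗ[R] C)
    (k l : I)
    (F : ℕ → Submodule R C)
    (hFd : ∀ p, ∀ c ∈ F p, d c ∈ F p)
    (hFadapted : ∀ p, F p = Submodule.span R (b '' {i : I | b i ∈ F p}))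
    (hFkl : ∀ p, b l ∈ F p → d (b k) ∈ F p) :
    ∀ (a : (cancelSet k l) →₀ R) (p : ℕ),
      (cancelIota b k l a ∈ F p → cancelIota b k l (cancelD b k l d a) ∈ F p) ∧
      (d (cancelIota b k l a) ∈ F p → cancelIota b k l (cancelD b k l d a) ∈ F p) := by
  intro a p
  have hd' := cancelIota_cancelD_mem b k l (hFadapted p) (hFkl p) (a := a)
  exact ⟨fun ha => hd' (hFd p _ ha), hd'⟩

/-- cancellation lemma, filtered part: given a decreasing,
basis-adapted, `d`-invariant filtration `F` with `F 0 = ⊤` such that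
`x_l ∈ F p → d x_k ∈ F p`, the reduced differential `d'` is filtered for the
induced filtration on `C'`, and its filtration degree is no less than that of
`d`. -/
theorem cancellation_filtered_differential (b : Module.Basis I R C) (d : C →ₗ[R] C)
    (hd : d ∘ₗ d = 0) (k l : I) (hkl : k ≠ l) (hdkl : b.repr (d (b k)) l = 1)
    (F : ℕ → Submodule R C) (hF0 : F 0 = ⊤) (hFmono : Antitone F)
    (hFd : ∀ p, ∀ c ∈ F p, d c ∈ F p)
    (hFadapted : ∀ p, F p = Submodule.span R (b '' {i : I | b i ∈ F p}))
    (hFkl : ∀ p, b l ∈ F p → d (b k) ∈ F p) :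
    ∀ (a : (cancelSet k l) →₀ R) (p : ℕ),
      (cancelIota b k l a ∈ F p → cancelIota b k l (cancelD b k l d a) ∈ F p) ∧
      (d (cancelIota b k l a) ∈ F p → cancelIota b k l (cancelD b k l d a) ∈ F p) :=
  cancellation_filtered_differential_general b d k l F hFd hFadapted hFkl
end

section
/- With the notation of the context, assume in addition that x_k and x_l lie in the same filtration levels, i.e. for every p one has x_k ∈ F^p if and only if x_l ∈ F^p. Then the chain maps f = π ∘ (id_C − d∘h) and g = (id_C − h∘d) ∘ ι and the homotopy h are all filtered: for every p ≥ 0, c ∈ F^p implies ι(f(c)) ∈ F^p, ι(a) ∈ F^p implies g(a) ∈ F^p, and c ∈ F^p implies h(c) ∈ F^p. In particular (C, d) and (C', d') are filtered chain homotopy equivalent. -/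
/-!
The homotopy `h = x_k ⊗ e_l` (with `e_l` the `l`-th coordinate) is rank one, so it preserves a
filtration adapted to the basis as soon as `x_l ∈ F^p` forces `x_k ∈ F^p`; `f` and `g` are built
from `h`, `d` and the coordinate projection `ι ∘ π`, each of which preserves an adapted
filtration. The identities `f ∘ g = id` and `id - g ∘ f = dh + hd` follow from `h ∘ ι = 0`,
`π ∘ h = 0`, `h ∘ h = 0` and `d ∘ d = 0`, together with `e_l ∘ (id - dh) = 0` and
`(id - hd) x_k = 0`, both consequences of `e_l (d x_k) = 1`.
-/

open Finsupp

variable {R : Type*} [CommRing R] {C : Type*} [AddCommGroup C] [Module R C]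
  {I : Type*}

namespace Module.Basis

variable {S M ι : Type*} [Semiring S] [AddCommMonoid M] [Module S M] (b : Basis ι S M)
  {N : Submodule S M}

theorem mem_of_repr_ne_zero_s3 (hN : N ≤ Submodule.span S (b '' {i | b i ∈ N})) {c : M}
    (hc : c ∈ N) {i : ι} (hi : b.repr c i ≠ 0) : b i ∈ N :=
  b.mem_span_image.mp (hN hc) (Finsupp.mem_support_iff.mpr hi)

theorem repr_smul_mem (hN : N ≤ Submodule.span S (b '' {i | b i ∈ N})) {c : M} (hc : c ∈ N)
    (i : ι) : b.repr c i • b i ∈ N := by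
  by_cases hi : b.repr c i = 0
  · simp [hi]
  · exact N.smul_mem _ (b.mem_of_repr_ne_zero_s3 hN hc hi)

end Module.Basis

namespace Cancellation

variable (b : Module.Basis I R C) (k l : I) (d : C →ₗ[R] C)

open Classical in
theorem repr_cancelIota (a : cancelSet k l →₀ R) :
    b.repr (cancelIota b k l a) = a.extendDomain := by
  rw [Finsupp.extendDomain_eq_embDomain_subtype,
    ← b.repr_linearCombination (Finsupp.embDomain _ a), Finsupp.linearCombination_embDomain]
  rfl

@[simp]
theorem cancelPi_apply (c : C) (j : cancelSet k l) : cancelPi b k l c j = b.repr c j :=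
  rfl

@[simp]
theorem cancelH_apply (c : C) : cancelH b k l c = b.repr c l • b k :=
  rfl

@[simp]
theorem cancelPi_cancelIota (a : cancelSet k l →₀ R) :
    cancelPi b k l (cancelIota b k l a) = a := by
  classical
  ext j
  simp [repr_cancelIota]

theorem repr_cancelIota_apply_of_notMem (a : cancelSet k l →₀ R) {i : I}
    (hi : i ∉ cancelSet k l) :
    b.repr (cancelIota b k l a) i = 0 := by
  classical
  simp [repr_cancelIota, hi]

theorem cancelIota_cancelPi (hkl : k ≠ l) (c : C) :
    cancelIota b k l (cancelPi b k l c) = c - b.repr c k • b k - b.repr c l • b l := by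
  classical
  apply b.repr.injective
  ext i
  by_cases hi : i ∈ cancelSet k l
  · simp [repr_cancelIota, hi, Ne.symm hi.1, Ne.symm hi.2]
  · rw [repr_cancelIota_apply_of_notMem b k l _ hi]
    obtain rfl | rfl : i = k ∨ i = l := by simpa [cancelSet, or_iff_not_imp_left] using hi
    · simp [hkl]
    · simp [hkl.symm]

theorem cancelF_apply (c : C) :
    cancelF b k l d c = cancelPi b k l (c - d (cancelH b k l c)) :=
  rfl

theorem cancelG_apply (a : cancelSet k l →₀ R) :
    cancelG b k l d a = cancelIota b k l a - cancelH b k l (d (cancelIota b k l a)) :=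
  rfl

@[simp]
theorem cancelH_cancelIota (a : cancelSet k l →₀ R) :
    cancelH b k l (cancelIota b k l a) = 0 := by
  simp [repr_cancelIota_apply_of_notMem b k l a fun h => h.2 rfl]

@[simp]
theorem cancelPi_cancelH (c : C) : cancelPi b k l (cancelH b k l c) = 0 := by
  classical
  ext j
  simp [Ne.symm j.2.1]

theorem cancelH_cancelH (hkl : k ≠ l) (c : C) : cancelH b k l (cancelH b k l c) = 0 := by
  simp [hkl]

theorem cancelF_cancelG (hkl : k ≠ l) (a : cancelSet k l →₀ R) :
    cancelF b k l d (cancelG b k l d a) = a := by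
  have hG : cancelH b k l (cancelG b k l d a) = 0 := by
    rw [cancelG_apply, map_sub, cancelH_cancelIota, cancelH_cancelH b k l hkl, sub_zero]
  rw [cancelF_apply, hG, map_zero, sub_zero, cancelG_apply, map_sub, cancelPi_cancelIota,
    cancelPi_cancelH, sub_zero]

theorem cancelG_cancelF (hd : d ∘ₗ d = 0) (hkl : k ≠ l) (hdkl : b.repr (d (b k)) l = 1)
    (c : C) :
    cancelG b k l d (cancelF b k l d c) = c - d (cancelH b k l c) - cancelH b k l (d c) := by
  set u := c - d (cancelH b k l c) with hu
  have hιπ : cancelIota b k l (cancelPi b k l u) = u - b.repr u k • b k := by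
    have hul : b.repr u l = 0 := by simp [hu, hdkl]
    rw [cancelIota_cancelPi b k l hkl, hul, zero_smul, sub_zero]
  have hxk : b k - cancelH b k l (d (b k)) = 0 := by simp [hdkl]
  have hdu : d u = d c := by simp [hu, ← LinearMap.comp_apply d d, hd]
  calc cancelG b k l d (cancelF b k l d c)
      = (u - cancelH b k l (d u)) - b.repr u k • (b k - cancelH b k l (d (b k))) := by
        rw [cancelG_apply, cancelF_apply, hιπ]
        simp only [map_sub, map_smul]
        module
    _ = c - d (cancelH b k l c) - cancelH b k l (d c) := by rw [hxk, smul_zero, sub_zero, hdu]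

variable {b k l d} {N : Submodule R C}

theorem cancelH_mem (hN : N ≤ Submodule.span R (b '' {i | b i ∈ N}))
    (hlk : b l ∈ N → b k ∈ N) {c : C} (hc : c ∈ N) : cancelH b k l c ∈ N := by
  by_cases h0 : b.repr c l = 0
  · simp [h0]
  · exact N.smul_mem _ (hlk (b.mem_of_repr_ne_zero_s3 hN hc h0))

theorem cancelIota_cancelPi_mem (hN : N ≤ Submodule.span R (b '' {i | b i ∈ N})) (hkl : k ≠ l)
    {c : C} (hc : c ∈ N) :
    cancelIota b k l (cancelPi b k l c) ∈ N := by
  rw [cancelIota_cancelPi b k l hkl]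
  exact N.sub_mem (N.sub_mem hc (b.repr_smul_mem hN hc k)) (b.repr_smul_mem hN hc l)

theorem cancelIota_cancelF_mem (hN : N ≤ Submodule.span R (b '' {i | b i ∈ N})) (hkl : k ≠ l)
    (hdN : ∀ c ∈ N, d c ∈ N) (hlk : b l ∈ N → b k ∈ N) {c : C} (hc : c ∈ N) :
    cancelIota b k l (cancelF b k l d c) ∈ N :=
  cancelIota_cancelPi_mem hN hkl (N.sub_mem hc (hdN _ (cancelH_mem hN hlk hc)))

theorem cancelG_mem (hN : N ≤ Submodule.span R (b '' {i | b i ∈ N}))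
    (hdN : ∀ c ∈ N, d c ∈ N) (hlk : b l ∈ N → b k ∈ N)
    {a : cancelSet k l →₀ R} (ha : cancelIota b k l a ∈ N) : cancelG b k l d a ∈ N :=
  N.sub_mem ha (cancelH_mem hN hlk (hdN _ ha))

end Cancellation

open Cancellation

theorem cancellation_filtered_homotopy_equivalence_general (b : Module.Basis I R C) (d : C →ₗ[R] C)
    (hd : d ∘ₗ d = 0) (k l : I) (hkl : k ≠ l) (hdkl : b.repr (d (b k)) l = 1)
    (F : ℕ → Submodule R C)
    (hFd : ∀ p, ∀ c ∈ F p, d c ∈ F p)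
    (hFadapted : ∀ p, F p = Submodule.span R (b '' {i : I | b i ∈ F p}))
    (hsame : ∀ p, b k ∈ F p ↔ b l ∈ F p) :
    (∀ (p : ℕ) (c : C), c ∈ F p → cancelIota b k l (cancelF b k l d c) ∈ F p) ∧
    (∀ (p : ℕ) (a : (cancelSet k l) →₀ R),
      cancelIota b k l a ∈ F p → cancelG b k l d a ∈ F p) ∧
    (∀ (p : ℕ) (c : C), c ∈ F p → cancelH b k l c ∈ F p) ∧
    (cancelF b k l d) ∘ₗ (cancelG b k l d) = LinearMap.id ∧
    LinearMap.id - (cancelG b k l d) ∘ₗ (cancelF b k l d) =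
      d ∘ₗ (cancelH b k l) + (cancelH b k l) ∘ₗ d := by
  have hN p := (hFadapted p).le
  have hlk p := (hsame p).mpr
  refine ⟨fun p c hc => cancelIota_cancelF_mem (hN p) hkl (hFd p) (hlk p) hc,
    fun p a ha => cancelG_mem (hN p) (hFd p) (hlk p) ha,
    fun p c hc => cancelH_mem (hN p) (hlk p) hc,
    LinearMap.ext (cancelF_cancelG b k l d hkl), LinearMap.ext fun c => ?_⟩
  simp only [LinearMap.sub_apply, LinearMap.add_apply, LinearMap.comp_apply, LinearMap.id_apply,
    cancelG_cancelF b k l d hd hkl hdkl]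
  abel

/-- cancellation lemma, filtered homotopy equivalence:
if moreover `x_k` and `x_l` lie in the same filtration levels, then the chain
maps `f`, `g` and the homotopy `h` are all filtered; in particular (together
with `f ∘ g = id` and `id - g ∘ f = d∘h + h∘d`) the complexes `(C, d)` and
`(C', d')` are filtered chain homotopy equivalent. -/
theorem cancellation_filtered_homotopy_equivalence (b : Module.Basis I R C) (d : C →ₗ[R] C)
    (hd : d ∘ₗ d = 0) (k l : I) (hkl : k ≠ l) (hdkl : b.repr (d (b k)) l = 1)
    (F : ℕ → Submodule R C) (hF0 : F 0 = ⊤) (hFmono : Antitone F)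
    (hFd : ∀ p, ∀ c ∈ F p, d c ∈ F p)
    (hFadapted : ∀ p, F p = Submodule.span R (b '' {i : I | b i ∈ F p}))
    (hFkl : ∀ p, b l ∈ F p → d (b k) ∈ F p)
    (hsame : ∀ p, b k ∈ F p ↔ b l ∈ F p) :
    (∀ (p : ℕ) (c : C), c ∈ F p → cancelIota b k l (cancelF b k l d c) ∈ F p) ∧
    (∀ (p : ℕ) (a : (cancelSet k l) →₀ R),
      cancelIota b k l a ∈ F p → cancelG b k l d a ∈ F p) ∧
    (∀ (p : ℕ) (c : C), c ∈ F p → cancelH b k l c ∈ F p) ∧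
    (cancelF b k l d) ∘ₗ (cancelG b k l d) = LinearMap.id ∧
    LinearMap.id - (cancelG b k l d) ∘ₗ (cancelF b k l d) =
      d ∘ₗ (cancelH b k l) + (cancelH b k l) ∘ₗ d :=
  cancellation_filtered_homotopy_equivalence_general b d hd k l hkl hdkl F hFd hFadapted hsame
end

section
/- Let M be a module over Λ_m, let v ∈ M, and let S ⊆ {1,…,m} be a subset such that X_S · v ≠ 0. Then the family (X_{S'} · v), indexed by all subsets S' ⊆ S, consists of 2^{|S|} elements of M that are linearly independent over F₂. Equivalently, for any nonempty collection of distinct subsets S₁,…,S_j of S one has X_{S₁}·v + ⋯ + X_{S_j}·v ≠ 0. -/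
/-!
If the `x i` square to zero, pick a member `T₀` of the family that is minimal for inclusion and
multiply the sum by `∏_{S \ T₀} x`. Every other member `T` contains an index outside `T₀`, which
then occurs twice in the product, so its term dies; the term of `T₀` becomes `(∏_S x) • v ≠ 0`.
-/

/-- `Λ_m = F₂[X₁,…,X_m]/(X₁²,…,X_m²)`. -/
abbrev Lambda (m : ℕ) : Type :=
  MvPolynomial (Fin m) (ZMod 2) ⧸
    Ideal.span (Set.range fun i : Fin m =>
      (MvPolynomial.X i : MvPolynomial (Fin m) (ZMod 2)) ^ 2)

/-- The class of the variable `X_i` in `Λ_m`. -/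
noncomputable def lamX {m : ℕ} (i : Fin m) : Lambda m :=
  Ideal.Quotient.mk _ (MvPolynomial.X i)

/-- `X_S = ∏_{i ∈ S} X_i` in `Λ_m` (with `X_∅ = 1`). -/
noncomputable def lamXS {m : ℕ} (S : Finset (Fin m)) : Lambda m :=
  ∏ i ∈ S, lamX i

section SquareZero

variable {ι R : Type*} {x : ι → R}

theorem prod_mul_prod_eq_zero_of_mem [CommMonoidWithZero R] (hx : ∀ i, x i * x i = 0)
    {A B : Finset ι} {i : ι} (hA : i ∈ A) (hB : i ∈ B) :
    (∏ j ∈ A, x j) * ∏ j ∈ B, x j = 0 := by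
  classical
  rw [← Finset.mul_prod_erase A x hA, ← Finset.mul_prod_erase B x hB, mul_mul_mul_comm, hx,
    zero_mul]

theorem prod_sdiff_mul_prod_eq_zero_of_not_subset [CommMonoidWithZero R] [DecidableEq ι]
    (hx : ∀ i, x i * x i = 0) {S T₀ T : Finset ι} (hT : T ⊆ S) (h : ¬T ⊆ T₀) :
    (∏ i ∈ S \ T₀, x i) * ∏ i ∈ T, x i = 0 := by
  obtain ⟨i, hiT, hiT₀⟩ := Finset.not_subset.mp h
  exact prod_mul_prod_eq_zero_of_mem hx (Finset.mem_sdiff.mpr ⟨hT hiT, hiT₀⟩) hiT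

theorem sum_prod_smul_ne_zero_of_mul_self_eq_zero {M : Type*} [CommSemiring R]
    [AddCommMonoid M] [Module R M] [DecidableEq ι] (hx : ∀ i, x i * x i = 0) {v : M}
    {S : Finset ι} (hS : (∏ i ∈ S, x i) • v ≠ 0) {𝒮 : Finset (Finset ι)} (hne : 𝒮.Nonempty)
    (hsub : ∀ T ∈ 𝒮, T ⊆ S) :
    ∑ T ∈ 𝒮, (∏ i ∈ T, x i) • v ≠ 0 := by
  obtain ⟨T₀, hT₀, hmin⟩ := 𝒮.exists_minimal hne
  have hterm : ∀ T ∈ 𝒮, (∏ i ∈ S \ T₀, x i) • (∏ i ∈ T, x i) • v =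
      if T = T₀ then (∏ i ∈ S, x i) • v else 0 := by
    intro T hT
    rw [smul_smul]
    split_ifs with hTT
    · rw [hTT, Finset.prod_sdiff (hsub T₀ hT₀)]
    · have hT₀T : ¬T ⊆ T₀ := fun h => hTT (le_antisymm h (hmin hT h))
      rw [prod_sdiff_mul_prod_eq_zero_of_not_subset hx (hsub T hT) hT₀T, zero_smul]
  intro hzero
  apply hS
  calc (∏ i ∈ S, x i) • v = ∑ T ∈ 𝒮, if T = T₀ then (∏ i ∈ S, x i) • v else 0 := by
        rw [Finset.sum_ite_eq', if_pos hT₀]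
    _ = (∏ i ∈ S \ T₀, x i) • ∑ T ∈ 𝒮, (∏ i ∈ T, x i) • v := by
        rw [Finset.smul_sum, Finset.sum_congr rfl hterm]
    _ = 0 := by rw [hzero, smul_zero]

end SquareZero

theorem lamX_mul_self {m : ℕ} (i : Fin m) : lamX i * lamX i = 0 := by
  rw [lamX, ← map_mul, ← sq, Ideal.Quotient.eq_zero_iff_mem]
  exact Ideal.subset_span ⟨i, rfl⟩

theorem lambda_monomials_linearIndependent_general (m : ℕ)
    (M : Type) [AddCommGroup M] [Module (Lambda m) M]
    (v : M) (S : Finset (Fin m)) (hS : lamXS S • v ≠ 0) :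
    ∀ 𝒮 : Finset (Finset (Fin m)), 𝒮.Nonempty → (∀ T ∈ 𝒮, T ⊆ S) →
      ∑ T ∈ 𝒮, lamXS T • v ≠ 0 :=
  fun _ hne hsub => sum_prod_smul_ne_zero_of_mul_self_eq_zero lamX_mul_self hS hne hsub

/-- if `M` is a `Λ_m`-module, `v ∈ M` and `S` is a set of
indices with `X_S · v ≠ 0`, then the `2^{|S|}` elements `X_{S'} · v`, for
`S' ⊆ S`, are linearly independent over `F₂`: every nonempty sum of distinct
such elements is nonzero. -/
theorem lambda_monomials_linearIndependent (m : ℕ) (hm : 1 ≤ m)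
    (M : Type) [AddCommGroup M] [Module (Lambda m) M]
    (v : M) (S : Finset (Fin m)) (hS : lamXS S • v ≠ 0) :
    ∀ 𝒮 : Finset (Finset (Fin m)), 𝒮.Nonempty → (∀ T ∈ 𝒮, T ⊆ S) →
      ∑ T ∈ 𝒮, lamXS T • v ≠ 0 :=
  lambda_monomials_linearIndependent_general m M v S hS
end
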